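/- Let σ_i ∈ ℝ, 1 ≤ q_i ≤ ∞, and 1 ≤ p_i ≤ u_i < ∞ or p_i = u_i = ∞, i = 1,2. For j ∈ ℕ₀ define Id_j: ñ^{σ₁}_{u₁,p₁,q₁} → ñ^{σ₂}_{u₂,p₂,q₂} by (Id_j λ)_{i,k} = λ_{j,k} if i = j and (Id_j λ)_{i,k} = 0 if i ≠ j. Set δ = σ₁ − σ₂ − d/u₁ + d/u₂. Then there is a constant C independent of j such that every Id_j is nuclear with ν(Id_j) ≤ C · 2^{−jδ} · 2^{jd(1 − (1/u₁ − min{1, p₂/p₁}/u₂)₊)}, where a₊ = max{a,0}. -/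

import Mathlib

open scoped ENNReal

/-- Sequences `λ = (λ_{j,m})` indexed by `j ∈ ℕ₀` and the dyadic cubes
`Q_{j,m} ⊆ Q = [0,1)^d` of side length `2^{-j}`, the latter encoded by
`m : Fin d → Fin (2^j)`. -/
abbrev DSeq (d : ℕ) := ∀ j : ℕ, (Fin d → Fin (2 ^ j)) → ℂ

/-- `Q_{j,m} ⊆ Q_{ν,k}` for `ν ≤ j` (cubes inside the unit cube): the condition is
`m i / 2^(j-ν) = k i` for all `i`. -/
def cubeLE {d j : ℕ} (ν : ℕ) (m : Fin d → Fin (2 ^ j)) (k : Fin d → ℕ) : Prop :=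
  ∀ i, (m i : ℕ) / 2 ^ (j - ν) = k i

instance {d j : ℕ} (ν : ℕ) (m : Fin d → Fin (2 ^ j)) (k : Fin d → ℕ) :
    Decidable (cubeLE ν m k) := by unfold cubeLE; infer_instance

/-- The `j`-th level of the Morrey sequence space norm:
`sup_{0 ≤ ν ≤ j, Q_{ν,k} ⊆ Q} 2^{d(j-ν)(1/u - 1/p)} (∑_{m : Q_{j,m} ⊆ Q_{ν,k}} |λ_{j,m}|^p)^{1/p}`,
with the sup over `m` instead of the `p`-sum when `p = ∞`. -/
noncomputable def levelNorm (d j : ℕ) (u p : ℝ≥0∞)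
    (f : (Fin d → Fin (2 ^ j)) → ℂ) : ℝ≥0∞ :=
  ⨆ ν : Fin (j + 1), ⨆ k : Fin d → Fin (2 ^ (ν : ℕ)),
    (2 : ℝ≥0∞) ^ (((d * (j - (ν : ℕ)) : ℕ) : ℝ) * ((u⁻¹).toReal - (p⁻¹).toReal)) *
      (if p = ∞ then
        ⨆ m : {m : Fin d → Fin (2 ^ j) // cubeLE (ν : ℕ) m fun i => (k i : ℕ)},
          (‖f m‖₊ : ℝ≥0∞)
       else
        (∑ m : Fin d → Fin (2 ^ j),
          if cubeLE (ν : ℕ) m (fun i => (k i : ℕ)) then (‖f m‖₊ : ℝ≥0∞) ^ p.toReal else 0)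
          ^ (1 / p.toReal))

/-- The (extended-real-valued) norm of the Morrey sequence space `ñ^σ_{u,p,q}`:
`‖λ‖ = (∑_j 2^{jq(σ - d/u)} [level_j(λ)]^q)^{1/q}`, with the sup over `j` when `q = ∞`.
A sequence belongs to `ñ^σ_{u,p,q}` iff this norm is finite. -/
noncomputable def nNorm (d : ℕ) (σ : ℝ) (u p q : ℝ≥0∞) (lam : DSeq d) : ℝ≥0∞ :=
  if q = ∞ then
    ⨆ j : ℕ, (2 : ℝ≥0∞) ^ ((j : ℝ) * (σ - d * (u⁻¹).toReal)) * levelNorm d j u p (lam j)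
  else
    (∑' j : ℕ, ((2 : ℝ≥0∞) ^ ((j : ℝ) * (σ - d * (u⁻¹).toReal)) *
        levelNorm d j u p (lam j)) ^ q.toReal) ^ (1 / q.toReal)

/-- The dual norm of a linear functional `f` with respect to the norm
`nNorm d σ u p q` (defined on the subspace of finite norm). -/
noncomputable def nDualNorm (d : ℕ) (σ : ℝ) (u p q : ℝ≥0∞)
    (f : DSeq d →ₗ[ℂ] ℂ) : ℝ :=
  sInf {C : ℝ | 0 ≤ C ∧ ∀ lam : DSeq d,
    nNorm d σ u p q lam ≠ ∞ → ‖f lam‖ ≤ C * (nNorm d σ u p q lam).toReal}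

/-- A nuclear representation of a linear operator `T` from `ñ^{σ₁}_{u₁,p₁,q₁}` to
`ñ^{σ₂}_{u₂,p₂,q₂}`: functionals `a n` (bounded on the source space, measured in the
dual norm) and elements `y n` of the target space with summable norm products, such
that for each `λ` in the source space the partial sums `∑_{n<N} a_n(λ) y_n` converge
to `T λ` in the target norm. -/
def IsNuclearRepN (d : ℕ) (σ₁ : ℝ) (u₁ p₁ q₁ : ℝ≥0∞) (σ₂ : ℝ) (u₂ p₂ q₂ : ℝ≥0∞)
    (T : DSeq d →ₗ[ℂ] DSeq d) (a : ℕ → (DSeq d →ₗ[ℂ] ℂ)) (y : ℕ → DSeq d) : Prop :=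
  (∀ n, nNorm d σ₂ u₂ p₂ q₂ (y n) ≠ ∞) ∧
  Summable (fun n => nDualNorm d σ₁ u₁ p₁ q₁ (a n) * (nNorm d σ₂ u₂ p₂ q₂ (y n)).toReal) ∧
  ∀ lam : DSeq d, nNorm d σ₁ u₁ p₁ q₁ lam ≠ ∞ →
    Filter.Tendsto
      (fun N : ℕ => nNorm d σ₂ u₂ p₂ q₂ (T lam - ∑ n ∈ Finset.range N, a n lam • y n))
      Filter.atTop (nhds 0)

/-- The natural embedding `Id : ñ^{σ₁}_{u₁,p₁,q₁} → ñ^{σ₂}_{u₂,p₂,q₂}` is nuclear: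
every element of the source space lies in the target space and the inclusion admits
a nuclear representation. -/
def NuclearEmbN (d : ℕ) (σ₁ : ℝ) (u₁ p₁ q₁ : ℝ≥0∞) (σ₂ : ℝ) (u₂ p₂ q₂ : ℝ≥0∞) : Prop :=
  (∀ lam : DSeq d, nNorm d σ₁ u₁ p₁ q₁ lam ≠ ∞ → nNorm d σ₂ u₂ p₂ q₂ lam ≠ ∞) ∧
  ∃ a y, IsNuclearRepN d σ₁ u₁ p₁ q₁ σ₂ u₂ p₂ q₂ (LinearMap.id : DSeq d →ₗ[ℂ] DSeq d) a y

/-- The Tong exponent `t(r₁,r₂)`: `1/t = 1` if `r₂ ≤ r₁`, and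
`1/t = 1 - 1/r₁ + 1/r₂` if `r₁ ≤ r₂`. -/
noncomputable def tong (r₁ r₂ : ℝ≥0∞) : ℝ≥0∞ :=
  if r₂ ≤ r₁ then 1 else (1 - r₁⁻¹ + r₂⁻¹)⁻¹

/-- The nuclear norm of a linear operator `T` from `ñ^{σ₁}_{u₁,p₁,q₁}` to
`ñ^{σ₂}_{u₂,p₂,q₂}`: the infimum of `∑_n ‖a n‖' ‖y n‖` over all nuclear
representations of `T`. -/
noncomputable def nucNormOpN (d : ℕ) (σ₁ : ℝ) (u₁ p₁ q₁ : ℝ≥0∞) (σ₂ : ℝ)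
    (u₂ p₂ q₂ : ℝ≥0∞) (T : DSeq d →ₗ[ℂ] DSeq d) : ℝ :=
  sInf {c : ℝ | ∃ a y, IsNuclearRepN d σ₁ u₁ p₁ q₁ σ₂ u₂ p₂ q₂ T a y ∧
    c = ∑' n, nDualNorm d σ₁ u₁ p₁ q₁ (a n) * (nNorm d σ₂ u₂ p₂ q₂ (y n)).toReal}

/-- The level projection `Id_j`: `(Id_j λ)_{i,k} = λ_{j,k}` if `i = j`, else `0`. -/
def levelProj (d j : ℕ) : DSeq d →ₗ[ℂ] DSeq d where
  toFun lam := fun i k => if i = j then lam i k else 0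
  map_add' lam μ := by
    funext i k
    by_cases h : i = j <;> simp [h]
  map_smul' c lam := by
    funext i k
    by_cases h : i = j <;> simp [h]

/-!
Fix `μ ≤ j` and write the index of a cube of level `j` as its parent of level `μ` plus an offset
inside the parent. The cubes with a given offset form a block with exactly one cube in every
cube of level `μ`; Fourier inversion on the group `(ℤ/2^μ)^d` of parent indices, block by block,
writes `Id_j` as a sum of `2^{jd}` rank-one maps `λ ↦ 2^{-μd} ⟨λ_j, ψ⟩ ψ`, with `ψ` a unimodular
character supported on a block. By Hölder the coefficient functionals have norm at most
`2^{dj(1/p₁ - 1/u₁) - dμ/p₁}` against the `j`-th level of `ñ^{σ₁}_{u₁,p₁,q₁}` (at most `1` by the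
trivial bound), while `ψ` has at most `2^{d(μ-ν)}` points in a cube of level `ν`, so its level
norm is at most `2^{d max(j(1/u₂ - 1/p₂) + μ/p₂, 0)}`. Choose `μ = 0` (coordinates) when
`(1/u₁ - min{1, p₂/p₁}/u₂)₊ = 0`, `μ = j` when `p₁ ≤ p₂`, and `μ = ⌈j(1 - p₂/u₂)⌉` otherwise.
-/

open scoped ComplexConjugate
open Finset

lemma two_rpow_mul_two_rpow (x y : ℝ) : (2 : ℝ≥0∞) ^ x * 2 ^ y = 2 ^ (x + y) :=
  (ENNReal.rpow_add x y two_ne_zero ENNReal.ofNat_ne_top).symm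

lemma le_two_rpow_neg_mul_of_two_rpow_mul_le {x : ℝ} {a b : ℝ≥0∞} (h : 2 ^ x * a ≤ b) :
    a ≤ 2 ^ (-x) * b :=
  calc a = 2 ^ (-x) * (2 ^ x * a) := by
        rw [← mul_assoc, two_rpow_mul_two_rpow, neg_add_cancel, ENNReal.rpow_zero, one_mul]
    _ ≤ 2 ^ (-x) * b := by gcongr

lemma toReal_two_rpow (x : ℝ) : ((2 : ℝ≥0∞) ^ x).toReal = (2 : ℝ) ^ x := by
  rw [← ENNReal.toReal_rpow, ENNReal.toReal_ofNat]

section Norms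

variable {d : ℕ}

lemma levelNorm_zero {j : ℕ} {u p : ℝ≥0∞} (hp : p ≠ 0) : levelNorm d j u p 0 = 0 := by
  by_cases hp' : p = ∞
  · simp [levelNorm, hp']
  · simp [levelNorm, hp', ENNReal.toReal_pos hp hp']

lemma nNorm_eq_of_forall_ne {σ : ℝ} {u p q : ℝ≥0∞} (hp : p ≠ 0) (hq : q ≠ 0) {lam : DSeq d}
    {j : ℕ} (hlam : ∀ i ≠ j, lam i = 0) :
    nNorm d σ u p q lam = 2 ^ ((j : ℝ) * (σ - d * (u⁻¹).toReal)) * levelNorm d j u p (lam j) := by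
  have hzero : ∀ i ≠ j,
      (2 : ℝ≥0∞) ^ ((i : ℝ) * (σ - d * (u⁻¹).toReal)) * levelNorm d i u p (lam i) = 0 := by
    intro i hi
    rw [hlam i hi, levelNorm_zero hp, mul_zero]
  rw [nNorm]
  split_ifs with hq'
  · refine le_antisymm (iSup_le fun i => ?_) (le_iSup_of_le j le_rfl)
    rcases eq_or_ne i j with rfl | hi
    · rfl
    · rw [hzero i hi]
      exact zero_le
  · have hq₀ : 0 < q.toReal := ENNReal.toReal_pos hq hq'
    rw [tsum_eq_single j fun i hi => by rw [hzero i hi, ENNReal.zero_rpow_of_pos hq₀],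
      ← ENNReal.rpow_mul, mul_one_div_cancel hq₀.ne', ENNReal.rpow_one]

lemma nNorm_zero {σ : ℝ} {u p q : ℝ≥0∞} (hp : p ≠ 0) (hq : q ≠ 0) : nNorm d σ u p q 0 = 0 := by
  rw [nNorm_eq_of_forall_ne hp hq (lam := 0) (j := 0) fun _ _ => rfl, Pi.zero_apply,
    levelNorm_zero hp, mul_zero]

lemma nNorm_single {σ : ℝ} {u p q : ℝ≥0∞} (hp : p ≠ 0) (hq : q ≠ 0) (j : ℕ)
    (f : (Fin d → Fin (2 ^ j)) → ℂ) :
    nNorm d σ u p q (Pi.single j f) =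
      2 ^ ((j : ℝ) * (σ - d * (u⁻¹).toReal)) * levelNorm d j u p f := by
  rw [nNorm_eq_of_forall_ne hp hq fun i hi =>
    Pi.single_eq_of_ne (M := fun i => (Fin d → Fin (2 ^ i)) → ℂ) hi f, Pi.single_eq_same]

lemma levelNorm_le_two_rpow_mul_nNorm {σ : ℝ} {u p q : ℝ≥0∞} (hq : q ≠ 0) (lam : DSeq d)
    (j : ℕ) :
    levelNorm d j u p (lam j) ≤
      2 ^ (-((j : ℝ) * (σ - d * (u⁻¹).toReal))) * nNorm d σ u p q lam := by
  refine le_two_rpow_neg_mul_of_two_rpow_mul_le ?_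
  rw [nNorm]
  split_ifs with hq'
  · exact le_iSup_of_le j le_rfl
  · have hq₀ : 0 < q.toReal := ENNReal.toReal_pos hq hq'
    refine le_trans (le_of_eq ?_) (ENNReal.rpow_le_rpow (ENNReal.le_tsum j) (by positivity))
    rw [← ENNReal.rpow_mul, mul_one_div_cancel hq₀.ne', ENNReal.rpow_one]

lemma nnnorm_le_levelNorm {j : ℕ} {u p : ℝ≥0∞} (hp : p ≠ 0) (f : (Fin d → Fin (2 ^ j)) → ℂ)
    (m : Fin d → Fin (2 ^ j)) : (‖f m‖₊ : ℝ≥0∞) ≤ levelNorm d j u p f := by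
  have hm : cubeLE j m fun i => (m i : ℕ) := fun i => by simp
  refine le_iSup_of_le (Fin.last j) (le_iSup_of_le (fun i => m i) ?_)
  simp only [Fin.val_last, Nat.sub_self, mul_zero, Nat.cast_zero, zero_mul, ENNReal.rpow_zero,
    one_mul]
  split_ifs with hp'
  · exact le_iSup_of_le ⟨m, hm⟩ le_rfl
  · have hp₀ : 0 < p.toReal := ENNReal.toReal_pos hp hp'
    calc (‖f m‖₊ : ℝ≥0∞) = ((‖f m‖₊ : ℝ≥0∞) ^ p.toReal) ^ (1 / p.toReal) := by
          rw [← ENNReal.rpow_mul, mul_one_div_cancel hp₀.ne', ENNReal.rpow_one]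
      _ ≤ _ := by
          refine ENNReal.rpow_le_rpow ?_ (by positivity)
          refine le_trans (le_of_eq ?_) (single_le_sum (fun _ _ => zero_le) (mem_univ m))
          simp [hm]

lemma lpNorm_le_two_rpow_mul_levelNorm {j : ℕ} {u p : ℝ≥0∞} (hp : p ≠ ∞)
    (f : (Fin d → Fin (2 ^ j)) → ℂ) :
    (∑ m, (‖f m‖₊ : ℝ≥0∞) ^ p.toReal) ^ p.toReal⁻¹ ≤
      2 ^ (d * j * ((p⁻¹).toReal - (u⁻¹).toReal)) * levelNorm d j u p f := by
  have hm : ∀ m : Fin d → Fin (2 ^ j), cubeLE 0 m fun _ => 0 := fun m i =>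
    Nat.div_eq_of_lt (by simp)
  have h0 : 2 ^ (d * j * ((u⁻¹).toReal - (p⁻¹).toReal)) *
      (∑ m, (‖f m‖₊ : ℝ≥0∞) ^ p.toReal) ^ p.toReal⁻¹ ≤ levelNorm d j u p f := by
    refine le_trans (le_of_eq ?_) (le_iSup_of_le 0 (le_iSup_of_le 0 le_rfl))
    simp [hp, hm]
  convert le_two_rpow_neg_mul_of_two_rpow_mul_le h0 using 3
  ring

end Norms

section Nuclear

variable {d : ℕ} {σ₁ σ₂ : ℝ} {u₁ p₁ q₁ u₂ p₂ q₂ : ℝ≥0∞}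

lemma nDualNorm_nonneg (f : DSeq d →ₗ[ℂ] ℂ) : 0 ≤ nDualNorm d σ₁ u₁ p₁ q₁ f :=
  Real.sInf_nonneg fun _ hC => hC.1

lemma nDualNorm_le {f : DSeq d →ₗ[ℂ] ℂ} {C : ℝ≥0∞} (hC : C ≠ ∞)
    (h : ∀ lam, nNorm d σ₁ u₁ p₁ q₁ lam ≠ ∞ → (‖f lam‖₊ : ℝ≥0∞) ≤ C * nNorm d σ₁ u₁ p₁ q₁ lam) :
    nDualNorm d σ₁ u₁ p₁ q₁ f ≤ C.toReal := by
  refine csInf_le ⟨0, fun _ hC => hC.1⟩ ⟨ENNReal.toReal_nonneg, fun lam hlam => ?_⟩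
  rw [← ENNReal.toReal_mul]
  exact ENNReal.toReal_mono (ENNReal.mul_ne_top hC hlam) (h lam hlam)

lemma nucNormOpN_le {T : DSeq d →ₗ[ℂ] DSeq d} {a : ℕ → DSeq d →ₗ[ℂ] ℂ} {y : ℕ → DSeq d}
    (h : IsNuclearRepN d σ₁ u₁ p₁ q₁ σ₂ u₂ p₂ q₂ T a y) :
    nucNormOpN d σ₁ u₁ p₁ q₁ σ₂ u₂ p₂ q₂ T ≤
      ∑' n, nDualNorm d σ₁ u₁ p₁ q₁ (a n) * (nNorm d σ₂ u₂ p₂ q₂ (y n)).toReal := by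
  refine csInf_le ⟨0, ?_⟩ ⟨a, y, h, rfl⟩
  rintro _ ⟨a', y', -, rfl⟩
  exact tsum_nonneg fun n => mul_nonneg (nDualNorm_nonneg _) ENNReal.toReal_nonneg

lemma sum_range_dite_equiv {ι M : Type*} [Fintype ι] [AddCommMonoid M] {N K : ℕ}
    (e : ι ≃ Fin N) (g : ι → M) (hK : N ≤ K) :
    ∑ n ∈ range K, (if h : n < N then g (e.symm ⟨n, h⟩) else 0) = ∑ i, g i := by
  rw [← sum_range_add_sum_Ico _ hK,
    sum_eq_zero (s := Ico _ K) fun n hn => dif_neg (by simp at hn; omega), add_zero, sum_range,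
    ← e.symm.sum_comp]
  simp

lemma exists_isNuclearRepN_of_sum {ι : Type*} [Fintype ι] (hp₂ : p₂ ≠ 0) (hq₂ : q₂ ≠ 0)
    {T : DSeq d →ₗ[ℂ] DSeq d} (a : ι → DSeq d →ₗ[ℂ] ℂ) (y : ι → DSeq d)
    (hT : ∀ lam, T lam = ∑ i, a i lam • y i) (hy : ∀ i, nNorm d σ₂ u₂ p₂ q₂ (y i) ≠ ∞) :
    (∃ a y, IsNuclearRepN d σ₁ u₁ p₁ q₁ σ₂ u₂ p₂ q₂ T a y) ∧
      nucNormOpN d σ₁ u₁ p₁ q₁ σ₂ u₂ p₂ q₂ T ≤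
        ∑ i, nDualNorm d σ₁ u₁ p₁ q₁ (a i) * (nNorm d σ₂ u₂ p₂ q₂ (y i)).toReal := by
  obtain ⟨N, ⟨e⟩⟩ : ∃ N, Nonempty (ι ≃ Fin N) := ⟨_, ⟨Fintype.equivFin ι⟩⟩
  let a' : ℕ → DSeq d →ₗ[ℂ] ℂ := fun n => if h : n < N then a (e.symm ⟨n, h⟩) else 0
  let y' : ℕ → DSeq d := fun n => if h : n < N then y (e.symm ⟨n, h⟩) else 0
  have hy' : ∀ n, nNorm d σ₂ u₂ p₂ q₂ (y' n) ≠ ∞ := fun n => by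
    by_cases h : n < N
    · simpa [y', h] using hy _
    · simp [y', h, nNorm_zero hp₂ hq₂]
  have hterm (n : ℕ) : nDualNorm d σ₁ u₁ p₁ q₁ (a' n) * (nNorm d σ₂ u₂ p₂ q₂ (y' n)).toReal =
      if h : n < N then nDualNorm d σ₁ u₁ p₁ q₁ (a (e.symm ⟨n, h⟩)) *
        (nNorm d σ₂ u₂ p₂ q₂ (y (e.symm ⟨n, h⟩))).toReal else 0 := by
    by_cases h : n < N <;> simp [a', y', h, nNorm_zero hp₂ hq₂]
  have hpartial (lam : DSeq d) {K : ℕ} (hK : N ≤ K) :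
      ∑ n ∈ range K, a' n lam • y' n = T lam := by
    rw [hT, ← sum_range_dite_equiv e _ hK]
    exact sum_congr rfl fun n _ => by by_cases h : n < N <;> simp [a', y', h]
  have hrep : IsNuclearRepN d σ₁ u₁ p₁ q₁ σ₂ u₂ p₂ q₂ T a' y' := by
    refine ⟨hy', summable_of_ne_finset_zero (s := range N) fun n hn => ?_,
      fun lam _ => tendsto_atTop_of_eventually_const (i₀ := N) fun K hK => ?_⟩
    · rw [hterm, dif_neg (by simpa using hn)]
    · rw [hpartial lam hK, sub_self, nNorm_zero hp₂ hq₂]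
  refine ⟨⟨a', y', hrep⟩, (nucNormOpN_le hrep).trans_eq ?_⟩
  rw [tsum_eq_sum (s := range N) fun n hn => by rw [hterm, dif_neg (by simpa using hn)]]
  simp_rw [hterm]
  exact sum_range_dite_equiv e
    (fun i => nDualNorm d σ₁ u₁ p₁ q₁ (a i) * (nNorm d σ₂ u₂ p₂ q₂ (y i)).toReal) le_rfl

end Nuclear

section Dyadic

variable {d j : ℕ}

def dyadicParent (μ : ℕ) (m : Fin d → Fin (2 ^ j)) : Fin d → Fin (2 ^ μ) := fun i =>
  ⟨m i / 2 ^ (j - μ), Nat.div_lt_of_lt_mul <| (m i).isLt.trans_le <| by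
    rw [← pow_add]; exact Nat.pow_le_pow_right two_pos (by omega)⟩

def dyadicOffset (μ : ℕ) (m : Fin d → Fin (2 ^ j)) : Fin d → Fin (2 ^ (j - μ)) := fun i =>
  ⟨m i % 2 ^ (j - μ), Nat.mod_lt _ (by positivity)⟩

lemma eq_of_dyadicParent_eq_of_dyadicOffset_eq {μ : ℕ} {m m' : Fin d → Fin (2 ^ j)}
    (hc : dyadicParent μ m = dyadicParent μ m') (hr : dyadicOffset μ m = dyadicOffset μ m') :
    m = m' :=
  funext fun i => Fin.ext <| Nat.ext_div_mod (congrArg Fin.val (congrFun hc i))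
    (congrArg Fin.val (congrFun hr i))

lemma card_dyadicOffset_eq_le (μ : ℕ) (r : Fin d → Fin (2 ^ (j - μ))) :
    #{m : Fin d → Fin (2 ^ j) | dyadicOffset μ m = r} ≤ 2 ^ (μ * d) := by
  calc _ ≤ Fintype.card (Fin d → Fin (2 ^ μ)) :=
        card_le_card_of_injOn (dyadicParent μ) (fun _ _ => mem_coe.2 (mem_univ _))
          fun m hm m' hm' hc => eq_of_dyadicParent_eq_of_dyadicOffset_eq hc
            ((mem_filter.1 hm).2.trans (mem_filter.1 hm').2.symm)
    _ = 2 ^ (μ * d) := by simp [pow_mul]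

/-- Inside a fixed cube of level `ν`, the parent of level `μ` is determined by its residue
modulo `2 ^ (μ - ν)` (a vacuous condition if `μ ≤ ν`). -/
lemma div_eq_of_div_eq_of_mod_eq {ν μ a b : ℕ} (hν : ν ≤ j) (hμ : μ ≤ j)
    (h : a / 2 ^ (j - ν) = b / 2 ^ (j - ν))
    (hmod : a / 2 ^ (j - μ) % 2 ^ (μ - ν) = b / 2 ^ (j - μ) % 2 ^ (μ - ν)) :
    a / 2 ^ (j - μ) = b / 2 ^ (j - μ) := by
  rcases le_total ν μ with hνμ | hμν
  · have key : ∀ x, x / 2 ^ (j - ν) = x / 2 ^ (j - μ) / 2 ^ (μ - ν) := fun x => by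
      rw [Nat.div_div_eq_div_mul, ← pow_add]; congr 2; omega
    exact Nat.ext_div_mod (by rwa [← key, ← key]) hmod
  · have key : ∀ x, x / 2 ^ (j - μ) = x / 2 ^ (j - ν) / 2 ^ (ν - μ) := fun x => by
      rw [Nat.div_div_eq_div_mul, ← pow_add]; congr 2; omega
    rw [key, key, h]

lemma card_cubeLE_dyadicOffset_eq_le {ν μ : ℕ} (hν : ν ≤ j) (hμ : μ ≤ j) (k : Fin d → ℕ)
    (r : Fin d → Fin (2 ^ (j - μ))) :
    #{m : Fin d → Fin (2 ^ j) | cubeLE ν m k ∧ dyadicOffset μ m = r} ≤ 2 ^ (d * (μ - ν)) := by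
  let residue (m : Fin d → Fin (2 ^ j)) : Fin d → Fin (2 ^ (μ - ν)) := fun i =>
    ⟨dyadicParent μ m i % 2 ^ (μ - ν), Nat.mod_lt _ (by positivity)⟩
  calc _ ≤ Fintype.card (Fin d → Fin (2 ^ (μ - ν))) := by
        refine card_le_card_of_injOn residue (fun _ _ => mem_coe.2 (mem_univ _)) ?_
        intro m hm m' hm' he
        simp only [mem_coe, mem_filter, mem_univ, true_and] at hm hm'
        refine eq_of_dyadicParent_eq_of_dyadicOffset_eq (funext fun i => Fin.ext ?_)
          (hm.2.trans hm'.2.symm)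
        exact div_eq_of_div_eq_of_mod_eq hν hμ ((hm.1 i).trans (hm'.1 i).symm)
          (congrArg Fin.val (congrFun he i))
    _ = 2 ^ (d * (μ - ν)) := by simp [← pow_mul, mul_comm]

end Dyadic

section Fourier

variable {d : ℕ} (j μ : ℕ)

noncomputable def blockChar (r : Fin d → Fin (2 ^ (j - μ))) (χ : AddChar (Fin d → Fin (2 ^ μ)) ℂ)
    (m : Fin d → Fin (2 ^ j)) : ℂ :=
  if dyadicOffset μ m = r then χ (dyadicParent μ m) else 0

noncomputable def blockCoeff (r : Fin d → Fin (2 ^ (j - μ)))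
    (χ : AddChar (Fin d → Fin (2 ^ μ)) ℂ) : DSeq d →ₗ[ℂ] ℂ where
  toFun lam := (2 ^ (μ * d) : ℂ)⁻¹ * ∑ m, conj (blockChar j μ r χ m) * lam j m
  map_add' lam lam' := by simp only [Pi.add_apply, mul_add, sum_add_distrib]
  map_smul' c lam := by
    simp only [Pi.smul_apply, smul_eq_mul, RingHom.id_apply, mul_sum]
    exact sum_congr rfl fun _ _ => by ring

variable {j μ}

lemma nnnorm_blockChar (r : Fin d → Fin (2 ^ (j - μ))) (χ : AddChar (Fin d → Fin (2 ^ μ)) ℂ)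
    (m : Fin d → Fin (2 ^ j)) :
    (‖blockChar j μ r χ m‖₊ : ℝ≥0∞) = if dyadicOffset μ m = r then 1 else 0 := by
  unfold blockChar
  split_ifs
  · simp [← enorm_eq_nnnorm, ← ofReal_norm, χ.norm_apply]
  · simp

lemma sum_conj_blockChar_mul_blockChar (r : Fin d → Fin (2 ^ (j - μ)))
    (m' m : Fin d → Fin (2 ^ j)) :
    ∑ χ, conj (blockChar j μ r χ m') * blockChar j μ r χ m =
      if dyadicOffset μ m = r ∧ m' = m then 2 ^ (μ * d) else 0 := by
  classical
  unfold blockChar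
  by_cases hm : dyadicOffset μ m = r
  · by_cases hm' : dyadicOffset μ m' = r
    · have hpar : dyadicParent μ m - dyadicParent μ m' = 0 ↔ m' = m := by
        rw [sub_eq_zero]
        exact ⟨fun h => eq_of_dyadicParent_eq_of_dyadicOffset_eq h.symm (hm'.trans hm.symm),
          fun h => h ▸ rfl⟩
      simp_rw [if_pos hm, if_pos hm', ← AddChar.map_neg_eq_conj, ← AddChar.map_add_eq_mul,
        neg_add_eq_sub, AddChar.sum_apply_eq_ite, hpar]
      simp [pow_mul, hm]
    · have hne : m' ≠ m := fun h => hm' (h ▸ hm)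
      simp [hm', hne]
  · simp [hm]

lemma sum_blockCoeff_mul_blockChar (lam : DSeq d) (m : Fin d → Fin (2 ^ j)) :
    ∑ r, ∑ χ, blockCoeff j μ r χ lam * blockChar j μ r χ m = lam j m := by
  calc _ = ∑ r, (2 ^ (μ * d) : ℂ)⁻¹ * ∑ m', lam j m' *
        ∑ χ, conj (blockChar j μ r χ m') * blockChar j μ r χ m := by
        refine sum_congr rfl fun r _ => ?_
        simp only [blockCoeff, LinearMap.coe_mk, AddHom.coe_mk, mul_assoc, sum_mul, mul_sum]
        rw [sum_comm]
        exact sum_congr rfl fun _ _ => sum_congr rfl fun _ _ => by ring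
    _ = lam j m := by
        simp_rw [sum_conj_blockChar_mul_blockChar, mul_ite, mul_zero, ite_and]
        simp [mul_comm]

lemma levelProj_eq_sum_blockCoeff_smul (lam : DSeq d) :
    levelProj d j lam = ∑ s : (Fin d → Fin (2 ^ (j - μ))) × AddChar (Fin d → Fin (2 ^ μ)) ℂ,
      blockCoeff j μ s.1 s.2 lam • Pi.single j (blockChar j μ s.1 s.2) := by
  funext i m
  simp only [Finset.sum_apply, Pi.smul_apply, smul_eq_mul]
  by_cases hi : i = j
  · subst hi
    simp [levelProj, Fintype.sum_prod_type, sum_blockCoeff_mul_blockChar]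
  · simp [levelProj, hi]

lemma nnnorm_blockCoeff_le (r : Fin d → Fin (2 ^ (j - μ))) (χ : AddChar (Fin d → Fin (2 ^ μ)) ℂ)
    (lam : DSeq d) :
    (‖blockCoeff j μ r χ lam‖₊ : ℝ≥0∞) ≤
      (2 ^ (μ * d))⁻¹ * ∑ m with dyadicOffset μ m = r, (‖lam j m‖₊ : ℝ≥0∞) := by
  simp only [blockCoeff, LinearMap.coe_mk, AddHom.coe_mk, ← enorm_eq_nnnorm, enorm_mul,
    enorm_inv (pow_ne_zero _ two_ne_zero : (2 : ℂ) ^ (μ * d) ≠ 0), enorm_pow]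
  have h2 : ‖(2 : ℂ)‖ₑ = 2 := by simp [← ofReal_norm]
  rw [h2]
  refine mul_le_mul_right ((enorm_sum_le _ _).trans (le_of_eq ?_)) _
  rw [sum_filter]
  refine sum_congr rfl fun m _ => ?_
  rw [enorm_mul, RCLike.enorm_conj, enorm_eq_nnnorm, nnnorm_blockChar]
  split_ifs <;> simp

lemma nnnorm_blockCoeff_le_levelNorm {u p : ℝ≥0∞} (hp : p ≠ 0) (r : Fin d → Fin (2 ^ (j - μ)))
    (χ : AddChar (Fin d → Fin (2 ^ μ)) ℂ) (lam : DSeq d) :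
    (‖blockCoeff j μ r χ lam‖₊ : ℝ≥0∞) ≤ levelNorm d j u p (lam j) := by
  refine (nnnorm_blockCoeff_le r χ lam).trans ?_
  calc _ ≤ (2 ^ (μ * d))⁻¹ * (#{m | dyadicOffset μ m = r} * levelNorm d j u p (lam j)) := by
        rw [← nsmul_eq_mul, ← sum_const]
        gcongr with m
        exact nnnorm_le_levelNorm hp _ m
    _ ≤ (2 ^ (μ * d))⁻¹ * (2 ^ (μ * d) * levelNorm d j u p (lam j)) := by
        gcongr
        exact_mod_cast card_dyadicOffset_eq_le μ r
    _ = levelNorm d j u p (lam j) := by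
        rw [← mul_assoc, ENNReal.inv_mul_cancel (by simp) (by simp), one_mul]

lemma nnnorm_blockCoeff_le_two_rpow_mul_levelNorm {u p : ℝ≥0∞} (hp : 1 ≤ p) (hp' : p ≠ ∞)
    (r : Fin d → Fin (2 ^ (j - μ))) (χ : AddChar (Fin d → Fin (2 ^ μ)) ℂ) (lam : DSeq d) :
    (‖blockCoeff j μ r χ lam‖₊ : ℝ≥0∞) ≤
      2 ^ (d * j * ((p⁻¹).toReal - (u⁻¹).toReal) - μ * d * (p⁻¹).toReal) *
        levelNorm d j u p (lam j) := by
  have hp₁ : 1 ≤ p.toReal := by simpa using ENNReal.toReal_mono hp' hp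
  set f : (Fin d → Fin (2 ^ j)) → ℝ≥0∞ := fun m => ‖lam j m‖₊
  set s := ({m | dyadicOffset μ m = r} : Finset _)
  have holder : ∑ m ∈ s, f m ≤ (#s : ℝ≥0∞) ^ (1 - p.toReal⁻¹) *
      (∑ m ∈ s, f m ^ p.toReal) ^ p.toReal⁻¹ := by
    simpa using ENNReal.inner_le_weight_mul_Lp_of_nonneg s hp₁ (fun _ => 1) f
  have hK : ((2 : ℝ≥0∞) ^ (μ * d))⁻¹ = 2 ^ (-(μ * d : ℝ)) := by
    rw [ENNReal.rpow_neg, ← ENNReal.rpow_natCast]; push_cast; rfl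
  have hcard : (#s : ℝ≥0∞) ^ (1 - p.toReal⁻¹) ≤ 2 ^ (μ * d * (1 - p.toReal⁻¹)) := by
    rw [ENNReal.rpow_mul]
    gcongr
    · linarith [inv_le_one_of_one_le₀ hp₁]
    · exact_mod_cast (card_dyadicOffset_eq_le μ r).trans_eq (by norm_cast)
  refine (nnnorm_blockCoeff_le r χ lam).trans ?_
  calc _ ≤ (2 ^ (μ * d))⁻¹ * (2 ^ (μ * d * (1 - p.toReal⁻¹)) *
        (2 ^ (d * j * ((p⁻¹).toReal - (u⁻¹).toReal)) * levelNorm d j u p (lam j))) := by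
        refine mul_le_mul_right (holder.trans (mul_le_mul' hcard ?_)) _
        exact (ENNReal.rpow_le_rpow (sum_le_sum_of_subset (subset_univ s)) (by positivity)).trans
          (lpNorm_le_two_rpow_mul_levelNorm hp' _)
    _ = _ := by
        rw [hK, ← mul_assoc, ← mul_assoc, two_rpow_mul_two_rpow, two_rpow_mul_two_rpow,
          ENNReal.toReal_inv]
        ring_nf

lemma levelNorm_blockChar_le {u p : ℝ≥0∞} (hp : p ≠ 0) (hpu : p ≤ u) (hμ : μ ≤ j)
    (r : Fin d → Fin (2 ^ (j - μ))) (χ : AddChar (Fin d → Fin (2 ^ μ)) ℂ) :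
    levelNorm d j u p (blockChar j μ r χ) ≤
      2 ^ max (d * j * ((u⁻¹).toReal - (p⁻¹).toReal) + d * μ * (p⁻¹).toReal) 0 := by
  have hβb : (u⁻¹).toReal ≤ (p⁻¹).toReal :=
    ENNReal.toReal_mono (by simpa using hp) (ENNReal.inv_le_inv.2 hpu)
  refine iSup_le fun ν => iSup_le fun k => ?_
  have hν : (ν : ℕ) ≤ j := Nat.lt_succ_iff.1 ν.isLt
  split_ifs with hp'
  · have hu : u = ∞ := top_le_iff.1 (hp' ▸ hpu)
    simp only [hp', hu, ENNReal.inv_top, ENNReal.toReal_zero, sub_zero, mul_zero,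
      ENNReal.rpow_zero, one_mul]
    refine iSup_le fun m => ?_
    rw [nnnorm_blockChar]
    split_ifs <;> simp
  · have hp₀ : 0 < p.toReal := ENNReal.toReal_pos hp hp'
    have hsum : (∑ m, if cubeLE ν m (fun i => (k i : ℕ))
        then (‖blockChar j μ r χ m‖₊ : ℝ≥0∞) ^ p.toReal else 0) =
        #{m | cubeLE ν m (fun i => (k i : ℕ)) ∧ dyadicOffset μ m = r} := by
      rw [← sum_boole]
      refine sum_congr rfl fun m _ => ?_
      rw [nnnorm_blockChar]
      split_ifs <;> simp_all [ENNReal.zero_rpow_of_pos hp₀]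
    have hcard : ((#{m | cubeLE ν m (fun i => (k i : ℕ)) ∧ dyadicOffset μ m = r} : ℕ) : ℝ≥0∞) ≤
        2 ^ (((d * (μ - ν) : ℕ) : ℝ)) := by
      rw [ENNReal.rpow_natCast]
      exact_mod_cast card_cubeLE_dyadicOffset_eq_le hν hμ _ r
    rw [hsum]
    calc _ ≤ (2 : ℝ≥0∞) ^ (((d * (j - ν) : ℕ) : ℝ) * ((u⁻¹).toReal - (p⁻¹).toReal)) *
          ((2 : ℝ≥0∞) ^ (((d * (μ - ν) : ℕ) : ℝ))) ^ (1 / p.toReal) := by gcongr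
      _ ≤ _ := by
        rw [← ENNReal.rpow_mul, two_rpow_mul_two_rpow, one_div, ← ENNReal.toReal_inv]
        refine ENNReal.rpow_le_rpow_of_exponent_le one_le_two ?_
        have hβ : 0 ≤ (u⁻¹).toReal := ENNReal.toReal_nonneg
        rcases le_total (ν : ℕ) μ with hνμ | hμν
        · refine le_max_of_le_left ?_
          push_cast [Nat.cast_sub hν, Nat.cast_sub hνμ]
          nlinarith [mul_nonneg (mul_nonneg d.cast_nonneg (ν : ℕ).cast_nonneg) hβ]
        · refine le_max_of_le_right ?_
          rw [Nat.sub_eq_zero_of_le hμν, mul_zero, Nat.cast_zero, zero_mul, add_zero]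
          exact mul_nonpos_of_nonneg_of_nonpos (Nat.cast_nonneg _) (by linarith)

end Fourier

section LevelProj

variable {d j : ℕ} {σ₁ σ₂ : ℝ} {u₁ p₁ q₁ u₂ p₂ q₂ : ℝ≥0∞}

lemma levelProj_nuclear_of_blocks (hp₂ : p₂ ≠ 0) (hq₂ : q₂ ≠ 0) {μ : ℕ} (hμ : μ ≤ j) {cA cY : ℝ}
    (hA : ∀ r χ lam, nNorm d σ₁ u₁ p₁ q₁ lam ≠ ∞ →
      (‖blockCoeff j μ r χ lam‖₊ : ℝ≥0∞) ≤ 2 ^ cA * nNorm d σ₁ u₁ p₁ q₁ lam)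
    (hY : ∀ r χ, nNorm d σ₂ u₂ p₂ q₂ (Pi.single j (blockChar j μ r χ)) ≤ 2 ^ cY) :
    (∃ a y, IsNuclearRepN d σ₁ u₁ p₁ q₁ σ₂ u₂ p₂ q₂ (levelProj d j) a y) ∧
      nucNormOpN d σ₁ u₁ p₁ q₁ σ₂ u₂ p₂ q₂ (levelProj d j) ≤ 2 ^ (j * d + cA + cY : ℝ) := by
  have htop (c : ℝ) : (2 : ℝ≥0∞) ^ c ≠ ∞ := by simp
  obtain ⟨hrep, hnuc⟩ := exists_isNuclearRepN_of_sum (σ₁ := σ₁) (u₁ := u₁) (p₁ := p₁) (q₁ := q₁)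
    (σ₂ := σ₂) (u₂ := u₂) (q₂ := q₂) (T := levelProj d j) hp₂ hq₂
    (fun s : (Fin d → Fin (2 ^ (j - μ))) × AddChar (Fin d → Fin (2 ^ μ)) ℂ =>
      blockCoeff j μ s.1 s.2)
    (fun s => Pi.single j (blockChar j μ s.1 s.2)) (fun lam => levelProj_eq_sum_blockCoeff_smul lam)
    fun s => ne_top_of_le_ne_top (htop cY) (hY s.1 s.2)
  refine ⟨hrep, hnuc.trans ?_⟩
  have hcard : Fintype.card ((Fin d → Fin (2 ^ (j - μ))) × AddChar (Fin d → Fin (2 ^ μ)) ℂ) =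
      (2 : ℝ) ^ (j * d : ℝ) := by
    have : Fintype.card ((Fin d → Fin (2 ^ (j - μ))) × AddChar (Fin d → Fin (2 ^ μ)) ℂ) =
        2 ^ (j * d) := by
      simp only [Fintype.card_prod, AddChar.card_eq, Fintype.card_fun, Fintype.card_fin, ← pow_mul,
        ← pow_add, ← add_mul, Nat.sub_add_cancel hμ]
    rw [this, ← Nat.cast_mul, Real.rpow_natCast]
    push_cast
    rfl
  calc _ ≤ ∑ _s : (Fin d → Fin (2 ^ (j - μ))) × AddChar (Fin d → Fin (2 ^ μ)) ℂ,
        (2 : ℝ) ^ cA * 2 ^ cY := by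
        refine sum_le_sum fun s _ => mul_le_mul ?_ ?_ ENNReal.toReal_nonneg (by positivity)
        · exact (nDualNorm_le (htop cA) (hA s.1 s.2)).trans_eq (toReal_two_rpow cA)
        · exact (ENNReal.toReal_mono (htop cY) (hY s.1 s.2)).trans_eq (toReal_two_rpow cY)
    _ = _ := by
        rw [sum_const, nsmul_eq_mul, card_univ, hcard, Real.rpow_add two_pos,
          Real.rpow_add two_pos, mul_assoc]

lemma nNorm_single_blockChar_le (hp₂ : p₂ ≠ 0) (hpu₂ : p₂ ≤ u₂) (hq₂ : q₂ ≠ 0) {μ : ℕ}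
    (hμ : μ ≤ j) (r : Fin d → Fin (2 ^ (j - μ))) (χ : AddChar (Fin d → Fin (2 ^ μ)) ℂ) :
    nNorm d σ₂ u₂ p₂ q₂ (Pi.single j (blockChar j μ r χ)) ≤
      2 ^ (j * (σ₂ - d * (u₂⁻¹).toReal) +
        max (d * j * ((u₂⁻¹).toReal - (p₂⁻¹).toReal) + d * μ * (p₂⁻¹).toReal) 0) := by
  rw [nNorm_single hp₂ hq₂, ← two_rpow_mul_two_rpow]
  gcongr
  exact levelNorm_blockChar_le hp₂ hpu₂ hμ r χ

lemma levelProj_nuclear_of_coord (hp₁ : p₁ ≠ 0) (hq₁ : q₁ ≠ 0) (hp₂ : p₂ ≠ 0) (hpu₂ : p₂ ≤ u₂)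
    (hq₂ : q₂ ≠ 0) :
    (∃ a y, IsNuclearRepN d σ₁ u₁ p₁ q₁ σ₂ u₂ p₂ q₂ (levelProj d j) a y) ∧
      nucNormOpN d σ₁ u₁ p₁ q₁ σ₂ u₂ p₂ q₂ (levelProj d j) ≤
        2 ^ (j * d - j * (σ₁ - d * (u₁⁻¹).toReal) + j * (σ₂ - d * (u₂⁻¹).toReal)) := by
  have hβb : (u₂⁻¹).toReal ≤ (p₂⁻¹).toReal :=
    ENNReal.toReal_mono (by simpa using hp₂) (ENNReal.inv_le_inv.2 hpu₂)
  have hmax : max (d * j * ((u₂⁻¹).toReal - (p₂⁻¹).toReal) + d * (0 : ℕ) * (p₂⁻¹).toReal) 0 = 0 :=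
    max_eq_right (by
      simpa using mul_nonpos_of_nonneg_of_nonpos (by positivity : (0 : ℝ) ≤ d * j)
        (sub_nonpos.2 hβb))
  obtain ⟨hrep, hnuc⟩ := levelProj_nuclear_of_blocks hp₂ hq₂ (Nat.zero_le j)
    (fun r χ lam _ => (nnnorm_blockCoeff_le_levelNorm hp₁ r χ lam).trans
      (levelNorm_le_two_rpow_mul_nNorm hq₁ lam j))
    (fun r χ => nNorm_single_blockChar_le hp₂ hpu₂ hq₂ (Nat.zero_le j) r χ)
  refine ⟨hrep, hnuc.trans_eq ?_⟩
  rw [hmax]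
  ring_nf

lemma levelProj_nuclear_of_fourier (hp₁ : 1 ≤ p₁) (hp₁' : p₁ ≠ ∞) (hq₁ : q₁ ≠ 0) (hp₂ : 1 ≤ p₂)
    (hpu₂ : p₂ ≤ u₂) (hq₂ : q₂ ≠ 0) {θ : ℝ} (hθ₀ : 0 ≤ θ) (hθ₁ : θ ≤ 1) :
    (∃ a y, IsNuclearRepN d σ₁ u₁ p₁ q₁ σ₂ u₂ p₂ q₂ (levelProj d j) a y) ∧
      nucNormOpN d σ₁ u₁ p₁ q₁ σ₂ u₂ p₂ q₂ (levelProj d j) ≤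
        2 ^ (j * d - j * (σ₁ - d * (u₁⁻¹).toReal) + j * (σ₂ - d * (u₂⁻¹).toReal) +
          d * j * (θ * (p₁⁻¹).toReal - (u₁⁻¹).toReal +
            max ((u₂⁻¹).toReal - θ * (p₂⁻¹).toReal) 0) + d) := by
  have hp₂₀ : p₂ ≠ 0 := (zero_lt_one.trans_le hp₂).ne'
  set μ := ⌈j * (1 - θ)⌉₊
  have hj : (0 : ℝ) ≤ j := j.cast_nonneg
  have hμ : μ ≤ j := Nat.ceil_le.2 (by nlinarith)
  have hμ₀ : j * (1 - θ) ≤ μ := Nat.le_ceil _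
  have hμ₁ : (μ : ℝ) < j * (1 - θ) + 1 := Nat.ceil_lt_add_one (by nlinarith)
  obtain ⟨hrep, hnuc⟩ := levelProj_nuclear_of_blocks hp₂₀ hq₂ hμ
    (fun r χ lam _ => (nnnorm_blockCoeff_le_two_rpow_mul_levelNorm hp₁ hp₁' r χ lam).trans <|
      (mul_le_mul_right (levelNorm_le_two_rpow_mul_nNorm hq₁ lam j) _).trans_eq <| by
        rw [← mul_assoc, two_rpow_mul_two_rpow])
    (fun r χ => nNorm_single_blockChar_le hp₂₀ hpu₂ hq₂ hμ r χ)
  refine ⟨hrep, hnuc.trans (Real.rpow_le_rpow_of_exponent_le one_le_two ?_)⟩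
  set a := (p₁⁻¹).toReal
  set b := (p₂⁻¹).toReal
  set β := (u₂⁻¹).toReal
  have hd : (0 : ℝ) ≤ d := d.cast_nonneg
  have hdj : (0 : ℝ) ≤ d * j := by positivity
  have ha : 0 ≤ a := ENNReal.toReal_nonneg
  have hb : 0 ≤ b := ENNReal.toReal_nonneg
  have hb₁ : b ≤ 1 := by
    simpa [b] using ENNReal.toReal_mono ENNReal.one_ne_top (ENNReal.inv_le_one.2 hp₂)
  have hcoeff : j * (1 - θ) * d * a ≤ μ * d * a := by gcongr
  have hmode : max (d * j * (β - b) + d * μ * b) 0 ≤ d * j * max (β - θ * b) 0 + d := by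
    refine max_le ?_ (by positivity)
    have h₁ : d * μ * b ≤ d * (j * (1 - θ) + 1) * b := by gcongr
    have h₂ : d * j * (β - θ * b) ≤ d * j * max (β - θ * b) 0 := by gcongr; exact le_max_left _ _
    have h₃ : d * b ≤ d := mul_le_of_le_one_right hd hb₁
    linarith
  linarith

end LevelProj

lemma exists_mul_add_max_le_toReal {p₁ u₂ p₂ : ℝ≥0∞} (hp₁ : 1 ≤ p₁) (hp₁' : p₁ ≠ ∞)
    (hp₂ : 1 ≤ p₂) (hpu₂ : p₂ ≤ u₂) :
    ∃ θ : ℝ, 0 ≤ θ ∧ θ ≤ 1 ∧ θ * (p₁⁻¹).toReal + max ((u₂⁻¹).toReal - θ * (p₂⁻¹).toReal) 0 ≤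
      (min 1 (p₂ / p₁) / u₂).toReal := by
  have hp₁₀ : p₁ ≠ 0 := (zero_lt_one.trans_le hp₁).ne'
  by_cases h : p₁ ≤ p₂ ∨ u₂ = ∞
  · refine ⟨0, le_rfl, zero_le_one, ?_⟩
    rcases h with h | h
    · have hmin : min 1 (p₂ / p₁) = 1 :=
        min_eq_left ((ENNReal.le_div_iff_mul_le (.inl hp₁₀) (.inl hp₁')).2 (by simpa using h))
      simp [hmin]
    · simp [h]
  rw [not_or, not_le] at h
  obtain ⟨hp₂₁, hu₂⟩ := h
  have hp₂' : p₂ ≠ ∞ := ne_top_of_lt hp₂₁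
  have hp₂₀ : p₂ ≠ 0 := (zero_lt_one.trans_le hp₂).ne'
  have hu₂₀ : u₂ ≠ 0 := (zero_lt_one.trans_le (hp₂.trans hpu₂)).ne'
  have hmin : min 1 (p₂ / p₁) = p₂ / p₁ :=
    min_eq_right (ENNReal.div_le_of_le_mul (by simpa using hp₂₁.le))
  have hP₂ : 0 < p₂.toReal := ENNReal.toReal_pos hp₂₀ hp₂'
  have hP₁ : 0 < p₁.toReal := ENNReal.toReal_pos hp₁₀ hp₁'
  have hU₂ : 0 < u₂.toReal := ENNReal.toReal_pos hu₂₀ hu₂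
  refine ⟨p₂.toReal / u₂.toReal, by positivity,
    div_le_one_of_le₀ (ENNReal.toReal_mono hu₂ hpu₂) hU₂.le, le_of_eq ?_⟩
  simp only [hmin, ENNReal.toReal_div, ENNReal.toReal_inv]
  rw [max_eq_right (by field_simp; norm_num), add_zero]
  field_simp

lemma one_le_and_le_of_admissible {p u : ℝ≥0∞}
    (h : (1 ≤ p ∧ p ≤ u ∧ u ≠ ∞) ∨ (p = ∞ ∧ u = ∞)) : 1 ≤ p ∧ p ≤ u := by
  rcases h with ⟨hp, hpu, -⟩ | ⟨rfl, rfl⟩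
  · exact ⟨hp, hpu⟩
  · exact ⟨le_top, le_rfl⟩

theorem stmt14_general (d : ℕ) (σ₁ σ₂ : ℝ) (u₁ p₁ q₁ u₂ p₂ q₂ : ℝ≥0∞)
    (hq₁ : 1 ≤ q₁) (hq₂ : 1 ≤ q₂)
    (h₁ : (1 ≤ p₁ ∧ p₁ ≤ u₁ ∧ u₁ ≠ ∞) ∨ (p₁ = ∞ ∧ u₁ = ∞))
    (h₂ : (1 ≤ p₂ ∧ p₂ ≤ u₂ ∧ u₂ ≠ ∞) ∨ (p₂ = ∞ ∧ u₂ = ∞)) :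
    ∃ C : ℝ, ∀ j : ℕ,
      (∃ a y, IsNuclearRepN d σ₁ u₁ p₁ q₁ σ₂ u₂ p₂ q₂ (levelProj d j) a y) ∧
      nucNormOpN d σ₁ u₁ p₁ q₁ σ₂ u₂ p₂ q₂ (levelProj d j) ≤
        C * (2 : ℝ) ^ (-(j : ℝ) * (σ₁ - σ₂ - d * (u₁⁻¹).toReal + d * (u₂⁻¹).toReal)) *
          (2 : ℝ) ^ ((j : ℝ) * d * (1 - (u₁⁻¹ - min 1 (p₂ / p₁) / u₂).toReal)) := by
  have hq₁₀ : q₁ ≠ 0 := (zero_lt_one.trans_le hq₁).ne'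
  have hq₂₀ : q₂ ≠ 0 := (zero_lt_one.trans_le hq₂).ne'
  obtain ⟨hp₁, hpu₁⟩ := one_le_and_le_of_admissible h₁
  obtain ⟨hp₂, hpu₂⟩ := one_le_and_le_of_admissible h₂
  refine ⟨2 ^ (d : ℝ), fun j => ?_⟩
  rw [← Real.rpow_add two_pos, ← Real.rpow_add two_pos]
  by_cases hX : u₁⁻¹ ≤ min 1 (p₂ / p₁) / u₂
  · refine (levelProj_nuclear_of_coord (zero_lt_one.trans_le hp₁).ne' hq₁₀
      (zero_lt_one.trans_le hp₂).ne' hpu₂ hq₂₀).imp_right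
      (·.trans <| Real.rpow_le_rpow_of_exponent_le one_le_two ?_)
    rw [tsub_eq_zero_of_le hX, ENNReal.toReal_zero]
    linarith [d.cast_nonneg (α := ℝ)]
  · have hu₁ : u₁ ≠ ∞ := by rintro rfl; simp at hX
    have hp₁' : p₁ ≠ ∞ := ne_top_of_le_ne_top hu₁ hpu₁
    obtain ⟨θ, hθ₀, hθ₁, hθ⟩ := exists_mul_add_max_le_toReal hp₁ hp₁' hp₂ hpu₂
    refine (levelProj_nuclear_of_fourier hp₁ hp₁' hq₁₀ hp₂ hpu₂ hq₂₀ hθ₀ hθ₁).imp_right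
      (·.trans <| Real.rpow_le_rpow_of_exponent_le one_le_two ?_)
    rw [ENNReal.toReal_sub_of_le (not_le.1 hX).le
      (ENNReal.inv_ne_top.2 (zero_lt_one.trans_le (hp₁.trans hpu₁)).ne')]
    linarith [mul_le_mul_of_nonneg_left hθ (by positivity : (0 : ℝ) ≤ d * j)]

/-- each level projection `Id_j : ñ^{σ₁}_{u₁,p₁,q₁} → ñ^{σ₂}_{u₂,p₂,q₂}`
is nuclear, with `ν(Id_j) ≤ C 2^{-jδ} 2^{jd(1 - (1/u₁ - min{1,p₂/p₁}/u₂)₊)}` for a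
constant `C` independent of `j`, where `δ = σ₁ - σ₂ - d/u₁ + d/u₂`. -/
theorem stmt14 (d : ℕ) (hd : 0 < d) (σ₁ σ₂ : ℝ) (u₁ p₁ q₁ u₂ p₂ q₂ : ℝ≥0∞)
    (hq₁ : 1 ≤ q₁) (hq₂ : 1 ≤ q₂)
    (h₁ : (1 ≤ p₁ ∧ p₁ ≤ u₁ ∧ u₁ ≠ ∞) ∨ (p₁ = ∞ ∧ u₁ = ∞))
    (h₂ : (1 ≤ p₂ ∧ p₂ ≤ u₂ ∧ u₂ ≠ ∞) ∨ (p₂ = ∞ ∧ u₂ = ∞)) :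
    ∃ C : ℝ, ∀ j : ℕ,
      (∃ a y, IsNuclearRepN d σ₁ u₁ p₁ q₁ σ₂ u₂ p₂ q₂ (levelProj d j) a y) ∧
      nucNormOpN d σ₁ u₁ p₁ q₁ σ₂ u₂ p₂ q₂ (levelProj d j) ≤
        C * (2 : ℝ) ^ (-(j : ℝ) * (σ₁ - σ₂ - d * (u₁⁻¹).toReal + d * (u₂⁻¹).toReal)) *
          (2 : ℝ) ^ ((j : ℝ) * d * (1 - (u₁⁻¹ - min 1 (p₂ / p₁) / u₂).toReal)) :=
  stmt14_general d σ₁ σ₂ u₁ p₁ q₁ u₂ p₂ q₂ hq₁ hq₂ h₁ h₂
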